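/- Let G be a finite simple graph, k ≥ 1, and let S be an independent set of vertices of G, each having at least one neighbor in G, with |S| > k. Let G' be obtained from G by adding, for each i ∈ [k], a root vertex r_i and pendant vertices {m^i_s : s ∈ S} with edges r_i–m^i_s and m^i_s–s for all s ∈ S, and, for each pair i < j in [k], a perfect matching between the pendant sets {m^i_s : s ∈ S} and {m^j_s : s ∈ S} (each pendant of gadget i is adjacent to exactly one pendant of gadget j); no other edges are added. Let H be the subgraph of G' induced on S together with all roots and pendants. If H contains no triangle and no cycle of length 4, then for every vertex u of H there do not exist k vertices v₁, …, v_k ∈ V(G') ∖ {u} with N_{G'}(u) ⊆ N_{G'}(v₁) ∪ … ∪ N_{G'}(v_k). -/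

import Mathlib

/-!
Each vertex `u` of `H` has `k + 1` neighbours in `G'` no two of which have a common neighbour
other than `u`; then `k` vertices other than `u` cannot cover `N(u)`, by pigeonhole. For `u ∈ S`
take its `k` pendants and a neighbour `w ∉ S` in `G`; for a root, `|S| > k` of its pendants;
for a pendant `m^i_s`, the root `r_i`, the vertex `s` and the `k - 1` pendants matched to it.
Inside `H` a second common neighbour would close a 4-cycle, and a vertex outside `H` only sees
vertices of `G`.
-/

/-- The graph `G'` obtained from `G` by attaching `k` matching gadgets to the set `S`
(for each `i ∈ [k]` a root `r_i` and pendants `m^i_s` for `s ∈ S`, with edges `r_i–m^i_s`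
and `m^i_s–s`), and matching the gadgets to one another: for `i < j`, pendant `m^i_s`
is adjacent exactly to the pendant `m^j_{σ i j s}`, where `σ i j` is a bijection of the
pendant index set. No other edges are added. -/
def multiMatchGraph {V : Type*} (G : SimpleGraph V) (k : ℕ) (S : Finset V)
    (σ : Fin k → Fin k → ({x // x ∈ S} ≃ {x // x ∈ S})) :
    SimpleGraph (V ⊕ Fin k ⊕ (Fin k × {x // x ∈ S})) :=
  SimpleGraph.fromRel (fun x y =>
    match x, y with
    | Sum.inl v, Sum.inl w => G.Adj v w
    | Sum.inr (Sum.inl i), Sum.inr (Sum.inr (i', _)) => i = i'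
    | Sum.inr (Sum.inr (_, s)), Sum.inl v => v = s.val
    | Sum.inr (Sum.inr (i, s)), Sum.inr (Sum.inr (j, t)) => i < j ∧ t = σ i j s
    | _, _ => False)

/-- The vertex set of the subgraph `H`: `S` together with all roots and pendants. -/
def gadgetSet {V : Type*} (k : ℕ) (S : Finset V) :
    Set (V ⊕ Fin k ⊕ (Fin k × {x // x ∈ S})) :=
  {x | match x with | Sum.inl v => v ∈ S | _ => True}

namespace SimpleGraph

variable {W : Type*}

def NoFourCycle (H : SimpleGraph W) : Prop :=
  ¬ ∃ a b c d : W, a ≠ b ∧ a ≠ c ∧ a ≠ d ∧ b ≠ c ∧ b ≠ d ∧ c ≠ d ∧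
    H.Adj a b ∧ H.Adj b c ∧ H.Adj c d ∧ H.Adj d a

def NeighborhoodCoverable (G : SimpleGraph W) (k : ℕ) (u : W) : Prop :=
  ∃ v : Fin k → W, (∀ i, v i ≠ u) ∧ ∀ z, G.Adj u z → ∃ i, G.Adj (v i) z

theorem NoFourCycle.eq_of_adj {H : SimpleGraph W} (hH : H.NoFourCycle) {u x z₁ z₂ : W}
    (hxu : x ≠ u) (hu₁ : H.Adj u z₁) (hu₂ : H.Adj u z₂) (hx₁ : H.Adj x z₁)
    (hx₂ : H.Adj x z₂) : z₁ = z₂ := by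
  by_contra hz
  exact hH ⟨x, z₁, u, z₂, hx₁.ne, hxu, hx₂.ne, hu₁.ne', hz, hu₂.ne, hx₁, hu₁.symm, hu₂,
    hx₂.symm⟩

theorem NoFourCycle.eq_of_adj_of_induce {G : SimpleGraph W} {X : Set W}
    (hH : (G.induce X).NoFourCycle) {u x z₁ z₂ : W} (hu : u ∈ X) (hx : x ∈ X)
    (hz₁ : z₁ ∈ X) (hz₂ : z₂ ∈ X) (hxu : x ≠ u) (hu₁ : G.Adj u z₁) (hu₂ : G.Adj u z₂)
    (hx₁ : G.Adj x z₁) (hx₂ : G.Adj x z₂) : z₁ = z₂ :=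
  congrArg Subtype.val <| hH.eq_of_adj (u := ⟨u, hu⟩) (x := ⟨x, hx⟩) (z₁ := ⟨z₁, hz₁⟩)
    (z₂ := ⟨z₂, hz₂⟩) (Subtype.coe_ne_coe.mp hxu) hu₁ hu₂ hx₁ hx₂

theorem not_neighborhoodCoverable_of_private {G : SimpleGraph W} {k : ℕ} {u : W}
    (T : Finset W) (hT : k < T.card) (hTu : ∀ z ∈ T, G.Adj u z)
    (hpriv : ∀ x, x ≠ u → ∀ z₁ ∈ T, ∀ z₂ ∈ T, G.Adj x z₁ → G.Adj x z₂ → z₁ = z₂) :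
    ¬ G.NeighborhoodCoverable k u := by
  rintro ⟨v, hvu, hcov⟩
  choose f hf using fun z : T => hcov z (hTu z z.2)
  obtain ⟨a, b, hab, hfab⟩ := Fintype.exists_ne_map_eq_of_card_lt f (by simpa using hT)
  exact hab (Subtype.ext (hpriv _ (hvu (f a)) a a.2 b b.2 (hf a) (hfab ▸ hf b)))

end SimpleGraph

namespace multiMatchGraph

open SimpleGraph Finset

variable {V : Type*} {G : SimpleGraph V} {k : ℕ} {S : Finset V}
  {σ : Fin k → Fin k → ({x // x ∈ S} ≃ {x // x ∈ S})}

abbrev root (S : Finset V) (i : Fin k) : V ⊕ Fin k ⊕ (Fin k × {x // x ∈ S}) :=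
  Sum.inr (Sum.inl i)

abbrev pendant (i : Fin k) (s : {x // x ∈ S}) : V ⊕ Fin k ⊕ (Fin k × {x // x ∈ S}) :=
  Sum.inr (Sum.inr (i, s))

/-- The index of the pendant of gadget `j` matched to `m^i_s`; meaningless for `j = i`. -/
def partner (σ : Fin k → Fin k → ({x // x ∈ S} ≃ {x // x ∈ S})) (i j : Fin k)
    (s : {x // x ∈ S}) : {x // x ∈ S} :=
  if i < j then σ i j s else (σ j i).symm s

theorem adj_inl_inl {a b : V} :
    (multiMatchGraph G k S σ).Adj (Sum.inl a) (Sum.inl b) ↔ G.Adj a b := by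
  simp only [multiMatchGraph, SimpleGraph.fromRel_adj, ne_eq, Sum.inl.injEq]
  exact ⟨fun ⟨_, h⟩ => h.elim id .symm, fun h => ⟨h.ne, .inl h⟩⟩

theorem not_adj_root_inl {i : Fin k} {a : V} :
    ¬ (multiMatchGraph G k S σ).Adj (root S i) (Sum.inl a) := by
  simp [multiMatchGraph]

theorem adj_root_pendant {i j : Fin k} {s : {x // x ∈ S}} :
    (multiMatchGraph G k S σ).Adj (root S i) (pendant j s) ↔ i = j := by
  simp [multiMatchGraph]

theorem adj_pendant_inl {i : Fin k} {s : {x // x ∈ S}} {a : V} :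
    (multiMatchGraph G k S σ).Adj (pendant i s) (Sum.inl a) ↔ a = s := by
  simp [multiMatchGraph]

theorem adj_pendant_inl_self (i : Fin k) (s : {x // x ∈ S}) :
    (multiMatchGraph G k S σ).Adj (pendant i s) (Sum.inl s.1) :=
  adj_pendant_inl.mpr rfl

theorem adj_pendant_partner {i j : Fin k} (hij : i ≠ j) (s : {x // x ∈ S}) :
    (multiMatchGraph G k S σ).Adj (pendant i s) (pendant j (partner σ i j s)) := by
  rcases hij.lt_or_gt with h | h
  · simp [multiMatchGraph, partner, h, hij]
  · simp [multiMatchGraph, partner, h, h.not_gt, hij]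

theorem pendant_injective_left (s : {x // x ∈ S}) :
    Function.Injective fun i : Fin k => (pendant i s : V ⊕ _) := by
  intro i j h
  simpa using h

theorem inr_mem_gadgetSet (y : Fin k ⊕ (Fin k × {x // x ∈ S})) :
    (Sum.inr y : V ⊕ Fin k ⊕ (Fin k × {x // x ∈ S})) ∈ gadgetSet k S := by
  cases y <;> trivial

theorem exists_eq_inl_of_adj_of_notMem_gadgetSet {x z : V ⊕ Fin k ⊕ (Fin k × {x // x ∈ S})}
    (hx : x ∉ gadgetSet k S) (hxz : (multiMatchGraph G k S σ).Adj x z) :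
    ∃ c, z = Sum.inl c := by
  obtain ⟨b, rfl⟩ : ∃ b, x = Sum.inl b := by
    rcases x with b | y
    · exact ⟨b, rfl⟩
    · exact absurd (inr_mem_gadgetSet y) hx
  rcases z with c | (j | ⟨j, t⟩)
  · exact ⟨c, rfl⟩
  · exact absurd hxz.symm not_adj_root_inl
  · exact absurd (adj_pendant_inl.mp hxz.symm ▸ t.2) hx

theorem mem_gadgetSet_of_adj_pendant {x : V ⊕ Fin k ⊕ (Fin k × {x // x ∈ S})} {j : Fin k}
    {t : {x // x ∈ S}} (h : (multiMatchGraph G k S σ).Adj x (pendant j t)) :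
    x ∈ gadgetSet k S := by
  by_contra hx
  obtain ⟨c, hc⟩ := exists_eq_inl_of_adj_of_notMem_gadgetSet hx h
  cases hc

theorem not_neighborhoodCoverable_inl
    (hH : ((multiMatchGraph G k S σ).induce (gadgetSet k S)).NoFourCycle)
    {a w : V} (ha : a ∈ S) (haw : G.Adj a w) (hw : w ∉ S) :
    ¬ (multiMatchGraph G k S σ).NeighborhoodCoverable k (Sum.inl a) := by
  classical
  let T : Finset (V ⊕ Fin k ⊕ (Fin k × {x // x ∈ S})) :=
    insert (Sum.inl w) (univ.image fun j => pendant j ⟨a, ha⟩)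
  have hwT : Sum.inl w ∉ univ.image fun j : Fin k => (pendant j ⟨a, ha⟩ : V ⊕ _) := by simp
  refine not_neighborhoodCoverable_of_private T ?_ ?_ ?_
  · simp [T, card_insert_of_notMem hwT, card_image_of_injective _ (pendant_injective_left _)]
  · simp only [T, mem_insert, mem_image, mem_univ, true_and]
    rintro z (rfl | ⟨j, rfl⟩)
    · exact adj_inl_inl.mpr haw
    · exact (adj_pendant_inl_self j ⟨a, ha⟩).symm
  · intro x hxa
    -- a common neighbour of `inl w` and of a pendant over `a` could only be `inl a` itself
    have hsep : ∀ j, (multiMatchGraph G k S σ).Adj x (Sum.inl w) →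
        ¬ (multiMatchGraph G k S σ).Adj x (pendant j ⟨a, ha⟩) := by
      intro j hxw hxj
      obtain ⟨b, rfl⟩ := exists_eq_inl_of_adj_of_notMem_gadgetSet hw hxw.symm
      exact hxa (congrArg Sum.inl (adj_pendant_inl.mp hxj.symm))
    simp only [T, mem_insert, mem_image, mem_univ, true_and]
    rintro z₁ (rfl | ⟨j₁, rfl⟩) z₂ (rfl | ⟨j₂, rfl⟩) hx₁ hx₂
    · rfl
    · exact absurd hx₂ (hsep j₂ hx₁)
    · exact absurd hx₁ (hsep j₁ hx₂)
    · exact hH.eq_of_adj_of_induce ha (mem_gadgetSet_of_adj_pendant hx₁)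
        (inr_mem_gadgetSet _) (inr_mem_gadgetSet _) hxa
        (adj_pendant_inl_self j₁ ⟨a, ha⟩).symm (adj_pendant_inl_self j₂ ⟨a, ha⟩).symm hx₁ hx₂

theorem not_neighborhoodCoverable_root
    (hH : ((multiMatchGraph G k S σ).induce (gadgetSet k S)).NoFourCycle)
    (hcard : k < S.card) (i : Fin k) :
    ¬ (multiMatchGraph G k S σ).NeighborhoodCoverable k (root S i) := by
  classical
  refine not_neighborhoodCoverable_of_private (univ.image (pendant i)) ?_ ?_ ?_
  · rwa [card_image_of_injective _ (fun s t h => by simpa using h), card_univ,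
      Fintype.card_coe]
  · simp only [mem_image, mem_univ, true_and]
    rintro z ⟨s, rfl⟩
    exact adj_root_pendant.mpr rfl
  · simp only [mem_image, mem_univ, true_and]
    rintro x hxi z₁ ⟨s₁, rfl⟩ z₂ ⟨s₂, rfl⟩ hx₁ hx₂
    exact hH.eq_of_adj_of_induce (inr_mem_gadgetSet _) (mem_gadgetSet_of_adj_pendant hx₁)
      (inr_mem_gadgetSet _) (inr_mem_gadgetSet _) hxi (adj_root_pendant.mpr rfl)
      (adj_root_pendant.mpr rfl) hx₁ hx₂

theorem not_neighborhoodCoverable_pendant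
    (hH : ((multiMatchGraph G k S σ).induce (gadgetSet k S)).NoFourCycle)
    (i : Fin k) (s : {x // x ∈ S}) :
    ¬ (multiMatchGraph G k S σ).NeighborhoodCoverable k (pendant i s) := by
  classical
  let T : Finset (V ⊕ Fin k ⊕ (Fin k × {x // x ∈ S})) :=
    insert (root S i) (insert (Sum.inl s.1)
      ((univ.erase i).image fun j => pendant j (partner σ i j s)))
  have hTmem : ∀ z ∈ T, z = root S i ∨ z = Sum.inl s.1 ∨
      ∃ j ≠ i, z = pendant j (partner σ i j s) := by
    simp only [T, mem_insert, mem_image, mem_erase, mem_univ, and_true]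
    rintro z (rfl | rfl | ⟨j, hj, rfl⟩)
    exacts [.inl rfl, .inr (.inl rfl), .inr (.inr ⟨j, hj, rfl⟩)]
  have hTu : ∀ z ∈ T, (multiMatchGraph G k S σ).Adj (pendant i s) z := by
    intro z hz
    rcases hTmem z hz with rfl | rfl | ⟨j, hj, rfl⟩
    · exact (adj_root_pendant.mpr rfl).symm
    · exact adj_pendant_inl_self i s
    · exact adj_pendant_partner hj.symm s
  refine not_neighborhoodCoverable_of_private T ?_ hTu ?_
  · have hinj : Function.Injective fun j : Fin k => (pendant j (partner σ i j s) : V ⊕ _) :=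
      fun j l h => by simp_all
    rw [card_insert_of_notMem (by simp), card_insert_of_notMem (by simp),
      card_image_of_injective _ hinj, card_erase_of_mem (mem_univ i), card_univ,
      Fintype.card_fin]
    have := i.pos
    omega
  · intro x hxu z₁ hz₁ z₂ hz₂ hx₁ hx₂
    by_cases hx : x ∈ gadgetSet k S
    · have hTX : ∀ z ∈ T, z ∈ gadgetSet k S := by
        intro z hz
        rcases hTmem z hz with rfl | rfl | ⟨j, -, rfl⟩
        exacts [inr_mem_gadgetSet _, s.2, inr_mem_gadgetSet _]
      exact hH.eq_of_adj_of_induce (inr_mem_gadgetSet _) hx (hTX z₁ hz₁) (hTX z₂ hz₂) hxu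
        (hTu z₁ hz₁) (hTu z₂ hz₂) hx₁ hx₂
    · have hxT : ∀ z ∈ T, (multiMatchGraph G k S σ).Adj x z → z = Sum.inl s.1 := by
        intro z hz hxz
        obtain ⟨c, rfl⟩ := exists_eq_inl_of_adj_of_notMem_gadgetSet hx hxz
        rcases hTmem _ hz with h | h | ⟨j, -, h⟩ <;> simp_all
      rw [hxT z₁ hz₁ hx₁, hxT z₂ hz₂ hx₂]

end multiMatchGraph

open multiMatchGraph in
theorem stmt13_general {V : Type*} (G : SimpleGraph V) (k : ℕ)
    (S : Finset V) (hcard : k < S.card)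
    (hind : ∀ a ∈ S, ∀ b ∈ S, ¬ G.Adj a b)
    (hnbr : ∀ a ∈ S, ∃ v : V, G.Adj a v)
    (σ : Fin k → Fin k → ({x // x ∈ S} ≃ {x // x ∈ S}))
    (hH4 : ¬ ∃ a b c d : (gadgetSet k S : Set _),
      a ≠ b ∧ a ≠ c ∧ a ≠ d ∧ b ≠ c ∧ b ≠ d ∧ c ≠ d ∧
      ((multiMatchGraph G k S σ).induce (gadgetSet k S)).Adj a b ∧
      ((multiMatchGraph G k S σ).induce (gadgetSet k S)).Adj b c ∧
      ((multiMatchGraph G k S σ).induce (gadgetSet k S)).Adj c d ∧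
      ((multiMatchGraph G k S σ).induce (gadgetSet k S)).Adj d a) :
    ∀ u ∈ gadgetSet k S,
      ¬ ∃ v : Fin k → (V ⊕ Fin k ⊕ (Fin k × {x // x ∈ S})),
        (∀ i, v i ≠ u) ∧
        ∀ z, (multiMatchGraph G k S σ).Adj u z →
          ∃ i, (multiMatchGraph G k S σ).Adj (v i) z := by
  rintro (a | i | ⟨i, s⟩) hu
  · obtain ⟨w, haw⟩ := hnbr a hu
    exact not_neighborhoodCoverable_inl hH4 hu haw (fun hw => hind a hu w hw haw)
  · exact not_neighborhoodCoverable_root hH4 hcard i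
  · exact not_neighborhoodCoverable_pendant hH4 i s

/-- If `S` is an independent set of more than `k` vertices of `G`, each with a neighbor,
`G'` is obtained by attaching `k` pairwise-matched matching gadgets to `S`, and the
subgraph `H` of `G'` induced on `S` together with all roots and pendants has no triangle
and no 4-cycle, then for every vertex `u` of `H` there are no `k` vertices
`v₁, …, v_k ≠ u` with `N_{G'}(u) ⊆ N_{G'}(v₁) ∪ … ∪ N_{G'}(v_k)`. -/
theorem stmt13 {V : Type*} [Fintype V] (G : SimpleGraph V) (k : ℕ) (hk : 1 ≤ k)
    (S : Finset V) (hcard : k < S.card)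
    (hind : ∀ a ∈ S, ∀ b ∈ S, ¬ G.Adj a b)
    (hnbr : ∀ a ∈ S, ∃ v : V, G.Adj a v)
    (σ : Fin k → Fin k → ({x // x ∈ S} ≃ {x // x ∈ S}))
    (hH3 : ((multiMatchGraph G k S σ).induce (gadgetSet k S)).CliqueFree 3)
    (hH4 : ¬ ∃ a b c d : (gadgetSet k S : Set _),
      a ≠ b ∧ a ≠ c ∧ a ≠ d ∧ b ≠ c ∧ b ≠ d ∧ c ≠ d ∧
      ((multiMatchGraph G k S σ).induce (gadgetSet k S)).Adj a b ∧
      ((multiMatchGraph G k S σ).induce (gadgetSet k S)).Adj b c ∧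
      ((multiMatchGraph G k S σ).induce (gadgetSet k S)).Adj c d ∧
      ((multiMatchGraph G k S σ).induce (gadgetSet k S)).Adj d a) :
    ∀ u ∈ gadgetSet k S,
      ¬ ∃ v : Fin k → (V ⊕ Fin k ⊕ (Fin k × {x // x ∈ S})),
        (∀ i, v i ≠ u) ∧
        ∀ z, (multiMatchGraph G k S σ).Adj u z →
          ∃ i, (multiMatchGraph G k S σ).Adj (v i) z :=
  stmt13_general G k S hcard hind hnbr σ hH4
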